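/- Let X be a real random variable and C > 0 with |E[X]| ≤ C/2. Define the clipped variable X̃ = sign(X)·min(C, |X|). Then |E[X̃] - E[X]| ≤ (2/C)·Var[X]. -/

import Mathlib

/-!
Clipping moves `X` only where `|X| > C`, and there by exactly `|X| - C`. Since `|E X| ≤ C / 2`,
on that event `|X - E X| ≥ |X| - C / 2`, and `C (|X| - C) ≤ 2 (|X| - C / 2)²`; so the pointwise
error is at most `(2 / C) (X - E X)²`, whose expectation is `(2 / C) Var X`.
-/

open MeasureTheory ProbabilityTheory

lemma Real.sign_mul_min_abs_eq_max_min {C : ℝ} (hC : 0 ≤ C) (x : ℝ) :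
    Real.sign x * min C |x| = max (-C) (min C x) := by
  rcases lt_trichotomy x 0 with hx | rfl | hx
  · rw [Real.sign_of_neg hx, abs_of_neg hx, neg_one_mul, ← max_neg_neg, neg_neg,
      min_eq_right (hx.le.trans hC)]
  · simp [hC]
  · rw [Real.sign_of_pos hx, abs_of_pos hx, one_mul, max_eq_right (by grind)]

lemma abs_max_neg_min_sub_self {C : ℝ} (hC : 0 ≤ C) (x : ℝ) :
    |max (-C) (min C x) - x| = |x| - min C |x| := by
  grind [abs_of_nonneg, abs_of_nonpos]

lemma abs_sub_min_abs_le {C m : ℝ} (hC : 0 < C) (hm : |m| ≤ C / 2) (x : ℝ) :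
    |x| - min C |x| ≤ 2 / C * (x - m) ^ 2 := by
  rcases le_total |x| C with hx | hx
  · rw [min_eq_right hx, sub_self]
    positivity
  · have hdist : |x| - C / 2 ≤ |x - m| := by
      linarith [abs_sub_abs_le_abs_sub x m]
    rw [min_eq_left hx, ← sq_abs (x - m), div_mul_eq_mul_div, le_div_iff₀ hC]
    nlinarith [abs_nonneg (x - m)]

lemma integrable_max_neg_min {Ω : Type*} [MeasurableSpace Ω] {μ : Measure Ω} [IsFiniteMeasure μ]
    {X : Ω → ℝ} (hX : AEStronglyMeasurable X μ) {C : ℝ} (hC : 0 ≤ C) :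
    Integrable (fun ω ↦ max (-C) (min C (X ω))) μ := by
  refine .of_bound ?_ C (.of_forall fun ω ↦ ?_)
  · exact (continuous_const.max (continuous_const.min continuous_id)).comp_aestronglyMeasurable hX
  · rw [Real.norm_eq_abs, abs_le]
    exact ⟨le_max_left _ _, max_le (by linarith) (min_le_left _ _)⟩

lemma abs_integral_sub_le_mul_variance {Ω : Type*} [MeasurableSpace Ω] {μ : Measure Ω}
    [IsFiniteMeasure μ] {X Y : Ω → ℝ} (hX : MemLp X 2 μ) (hY : Integrable Y μ) {K : ℝ}
    (hXY : ∀ᵐ ω ∂μ, |Y ω - X ω| ≤ K * (X ω - μ[X]) ^ 2) :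
    |μ[Y] - μ[X]| ≤ K * Var[X; μ] := by
  have hXint : Integrable X μ := hX.integrable one_le_two
  calc |μ[Y] - μ[X]| = |∫ ω, (Y ω - X ω) ∂μ| := by rw [integral_sub hY hXint]
    _ ≤ ∫ ω, |Y ω - X ω| ∂μ := abs_integral_le_integral_abs
    _ ≤ ∫ ω, K * (X ω - μ[X]) ^ 2 ∂μ :=
        integral_mono_ae (hY.sub hXint).abs
          ((hX.sub (memLp_const _)).integrable_sq.const_mul K) hXY
    _ = K * Var[X; μ] := by
        rw [integral_const_mul, variance_eq_integral hX.aestronglyMeasurable.aemeasurable]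

theorem clipping_bias_bound_general
    {Ω : Type*} [MeasureSpace Ω] [IsProbabilityMeasure (ℙ : Measure Ω)]
    (X : Ω → ℝ) (C : ℝ) (hC : 0 < C)
    (hL2 : MemLp X 2 ℙ)
    (hmean : |∫ ω, X ω| ≤ C / 2) :
    |(∫ ω, Real.sign (X ω) * min C |X ω|) - ∫ ω, X ω| ≤ (2 / C) * Var[X] := by
  simp_rw [Real.sign_mul_min_abs_eq_max_min hC.le]
  refine abs_integral_sub_le_mul_variance hL2
    (integrable_max_neg_min hL2.aestronglyMeasurable hC.le) (.of_forall fun ω ↦ ?_)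
  rw [abs_max_neg_min_sub_self hC.le]
  exact abs_sub_min_abs_le hC hmean (X ω)

theorem clipping_bias_bound
    {Ω : Type*} [MeasureSpace Ω] [IsProbabilityMeasure (ℙ : Measure Ω)]
    (X : Ω → ℝ) (C : ℝ) (hC : 0 < C)
    (hint : Integrable X) (hL2 : MemLp X 2 ℙ)
    (hmean : |∫ ω, X ω| ≤ C / 2) :
    |(∫ ω, Real.sign (X ω) * min C |X ω|) - ∫ ω, X ω| ≤ (2 / C) * Var[X] :=
  clipping_bias_bound_general X C hC hL2 hmean
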